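/- For all natural numbers m, n, every positive integer N, and every t ∈ [0, 1/(N·2ⁿ + 2)], one has g₁^[m]( 2ⁿ·t / (−(2^{m+1} − 2^{n+1} + N·2^{m+n})·t + 2^m) ) = g₂^[N](g₁^[n](t)). (Equivalently, the element g₁^{−m} g₂^{N} g₁^{n} acts on [0, 1/(N·2ⁿ+2)] by t ↦ 2ⁿ t / (−(2^{m+1} − 2^{n+1} + N·2^{m+n})t + 2^m).) -/

import Mathlib

/-- The element `g₁` of the Lodha–Moore group as a piecewise fractional linear map. -/
noncomputable def g₁ (t : ℝ) : ℝ :=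
  if t ≤ 0 then t
  else if t ≤ 1 / 2 then 2 * t / (2 * t + 1)
  else if t ≤ 1 then 1 / (3 - 2 * t)
  else t

/-- The element `g₂` of the Lodha–Moore group as a piecewise fractional linear map. -/
noncomputable def g₂ (t : ℝ) : ℝ :=
  if t ≤ 0 then t
  else if t ≤ 1 / 3 then t / (1 - t)
  else if t ≤ 1 / 2 then (4 * t - 1) / (5 * t - 1)
  else if t ≤ 1 then 1 / (2 - t)
  else t

/-!
Near `0` both generators are fractional linear: writing a point as a fraction `P / Q`, one
has `g₁ (P / Q) = 2P / (2P + Q)` and `g₂ (P / Q) = P / (Q - P)`. These transformations of the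
pair `(P, Q)` are linear, so their iterates are computed in closed form, and they keep the
point in the region where the formulas hold. The theorem then reduces to the identity that the
denominator obtained on the left is `2^m` times the one obtained on the right.
-/

lemma g₁_div {P Q : ℝ} (hP : 0 ≤ P) (hPQ : 2 * P ≤ Q) : g₁ (P / Q) = 2 * P / (2 * P + Q) := by
  rcases hP.eq_or_lt with rfl | hP
  · simp [g₁]
  have hQ : 0 < Q := by linarith
  have hpos : ¬ P / Q ≤ 0 := not_le.2 (div_pos hP hQ)
  have hhalf : P / Q ≤ 1 / 2 := by rw [div_le_div_iff₀ hQ two_pos]; linarith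
  rw [g₁, if_neg hpos, if_pos hhalf]
  field_simp

lemma g₂_div {P Q : ℝ} (hP : 0 ≤ P) (hPQ : 3 * P ≤ Q) : g₂ (P / Q) = P / (Q - P) := by
  rcases hP.eq_or_lt with rfl | hP
  · simp [g₂]
  have hQ : 0 < Q := by linarith
  have hpos : ¬ P / Q ≤ 0 := not_le.2 (div_pos hP hQ)
  have hthird : P / Q ≤ 1 / 3 := by rw [div_le_div_iff₀ hQ three_pos]; linarith
  rw [g₂, if_neg hpos, if_pos hthird]
  field_simp

lemma g₁_iterate_div (m : ℕ) {P Q : ℝ} (hP : 0 ≤ P) (hPQ : 2 * P ≤ Q) :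
    g₁^[m] (P / Q) = 2 ^ m * P / ((2 ^ (m + 1) - 2) * P + Q) := by
  induction m generalizing P Q with
  | zero => norm_num
  | succ m ih =>
    rw [Function.iterate_succ_apply, g₁_div hP hPQ, ih (by positivity) (by linarith)]
    congr 1 <;> ring

lemma g₂_iterate_div (N : ℕ) {P Q : ℝ} (hP : 0 ≤ P) (hPQ : (N + 2) * P ≤ Q) :
    g₂^[N] (P / Q) = P / (Q - N * P) := by
  induction N generalizing Q with
  | zero => simp
  | succ N ih =>
    push_cast at hPQ ⊢
    rw [Function.iterate_succ_apply, g₂_div hP (by nlinarith), ih (by linarith)]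
    congr 1
    ring

theorem normal_form_action₁_general (m n : ℕ) (N : ℕ) (t : ℝ)
    (ht : t ∈ Set.Icc (0 : ℝ) (1 / ((N : ℝ) * 2 ^ n + 2))) :
    g₁^[m] (2 ^ n * t
        / (-((2 : ℝ) ^ (m + 1) - 2 ^ (n + 1) + (N : ℝ) * 2 ^ (m + n)) * t + 2 ^ m))
      = g₂^[N] (g₁^[n] t) := by
  obtain ⟨h0, h1⟩ := ht
  have hbound : ((N : ℝ) * 2 ^ n + 2) * t ≤ 1 := by
    rwa [le_div_iff₀ (by positivity), mul_comm] at h1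
  have hbound_m := mul_le_mul_of_nonneg_left hbound (pow_nonneg zero_le_two m : (0 : ℝ) ≤ 2 ^ m)
  have hNt : 0 ≤ (N : ℝ) * 2 ^ n * t := by positivity
  have hrhs := g₁_iterate_div n h0 (Q := 1) (by linarith)
  rw [div_one] at hrhs
  rw [g₁_iterate_div m (by positivity) (by ring_nf at hbound_m ⊢; linarith), hrhs,
    g₂_iterate_div N (by positivity) (by ring_nf at hbound ⊢; linarith)]
  rw [show ((2 : ℝ) ^ (m + 1) - 2) * (2 ^ n * t)
        + (-((2 : ℝ) ^ (m + 1) - 2 ^ (n + 1) + N * 2 ^ (m + n)) * t + 2 ^ m)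
      = 2 ^ m * (((2 : ℝ) ^ (n + 1) - 2) * t + 1 - N * (2 ^ n * t)) by ring]
  exact mul_div_mul_left _ _ (pow_ne_zero m two_ne_zero)

/-- The element `g₁⁻ᵐ g₂ᴺ g₁ⁿ` acts on `[0, 1/(N·2ⁿ + 2)]` by
`t ↦ 2ⁿ t / (−(2^(m+1) − 2^(n+1) + N·2^(m+n))t + 2^m)`. -/
theorem normal_form_action₁ (m n : ℕ) (N : ℕ) (hN : 0 < N) (t : ℝ)
    (ht : t ∈ Set.Icc (0 : ℝ) (1 / ((N : ℝ) * 2 ^ n + 2))) :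
    g₁^[m] (2 ^ n * t
        / (-((2 : ℝ) ^ (m + 1) - 2 ^ (n + 1) + (N : ℝ) * 2 ^ (m + n)) * t + 2 ^ m))
      = g₂^[N] (g₁^[n] t) :=
  normal_form_action₁_general m n N t ht
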